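/- arXiv:1205.1477 — 6 statements merged into one kernel-verified Lean document; each statement's English description precedes it below -/
import Mathlib

section
/- Let M be a matroid on a finite ground set E with rank function r, and let x : E → ℝ be a point of the matroid polytope P(M). If A ⊆ E and B ⊆ E are both tight with respect to x (i.e. ∑_{e∈A} x_e = r(A) and ∑_{e∈B} x_e = r(B)), then A ∩ B and A ∪ B are also tight with respect to x, i.e. ∑_{e∈A∩B} x_e = r(A∩B) and ∑_{e∈A∪B} x_e = r(A∪B). -/
open scoped BigOperators Classical

/-- The rank function of a matroid: `mrank M S` is the maximum cardinality of an
independent subset of `S`. -/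
noncomputable def mrank {α : Type*} (M : Matroid α) (S : Set α) : ℕ :=
  sSup {n : ℕ | ∃ I : Finset α, ↑I ⊆ S ∧ M.Indep ↑I ∧ I.card = n}

/-! On finite sets `mrank` agrees with Mathlib's `Matroid.eRk`, so it is submodular. Since
`x` is modular, `x(A ∩ B) + x(A ∪ B) = r(A) + r(B) ≥ r(A ∩ B) + r(A ∪ B)`, and as each term on
the left is bounded by the corresponding rank, both bounds are equalities. -/

namespace Matroid

variable {α : Type*} {M : Matroid α} {S : Set α}

lemma mrank_eq_card_of_isBasis' {I : Finset α} (hI : M.IsBasis' I S) : mrank M S = I.card := by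
  refine IsGreatest.csSup_eq ⟨⟨I, hI.subset, hI.indep, rfl⟩, ?_⟩
  rintro n ⟨J, hJS, hJ, rfl⟩
  have hle : (J : Set α).encard ≤ (I : Set α).encard :=
    hI.encard_eq_eRk ▸ hJ.encard_le_eRk_of_subset hJS
  simpa only [Set.encard_coe_eq_coe_finsetCard, Nat.cast_le] using hle

lemma mrank_eq_eRk (hS : M.IsRkFinite S) : (mrank M S : ℕ∞) = M.eRk S := by
  obtain ⟨I, hI⟩ := hS.exists_finset_isBasis'
  rw [mrank_eq_card_of_isBasis' hI, ← hI.encard_eq_eRk, Set.encard_coe_eq_coe_finsetCard]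

lemma mrank_inter_add_mrank_union_le {X Y : Set α} (hX : M.IsRkFinite X) (hY : M.IsRkFinite Y) :
    mrank M (X ∩ Y) + mrank M (X ∪ Y) ≤ mrank M X + mrank M Y := by
  have h := M.eRk_inter_add_eRk_union_le X Y
  rw [← mrank_eq_eRk hX, ← mrank_eq_eRk hY, ← mrank_eq_eRk hX.inter_right,
    ← mrank_eq_eRk (hX.union hY)] at h
  exact_mod_cast h

end Matroid

theorem tight_sets_closed_under_inter_union_general
    {α : Type*} [DecidableEq α] (M : Matroid α)
    (x : α → ℝ)
    (hxP : ∀ S : Finset α, ∑ e ∈ S, x e ≤ (mrank M ↑S : ℝ))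
    (A B : Finset α)
    (hA : ∑ e ∈ A, x e = (mrank M ↑A : ℝ))
    (hB : ∑ e ∈ B, x e = (mrank M ↑B : ℝ)) :
    ∑ e ∈ A ∩ B, x e = (mrank M ↑(A ∩ B) : ℝ) ∧
      ∑ e ∈ A ∪ B, x e = (mrank M ↑(A ∪ B) : ℝ) := by
  have hsubmod : (mrank M ↑(A ∩ B) : ℝ) + mrank M ↑(A ∪ B) ≤ mrank M ↑A + mrank M ↑B := by
    rw [Finset.coe_inter, Finset.coe_union]
    exact_mod_cast Matroid.mrank_inter_add_mrank_union_le
      (M.isRkFinite_of_finite A.finite_toSet) (M.isRkFinite_of_finite B.finite_toSet)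
  have hmod := Finset.sum_union_inter (s₁ := A) (s₂ := B) (f := x)
  have hinter := hxP (A ∩ B)
  have hunion := hxP (A ∪ B)
  constructor <;> linarith

theorem tight_sets_closed_under_inter_union
    {α : Type*} [Fintype α] [DecidableEq α] (M : Matroid α) (hE : M.E = Set.univ)
    (x : α → ℝ) (hx0 : ∀ e, 0 ≤ x e)
    (hxP : ∀ S : Finset α, ∑ e ∈ S, x e ≤ (mrank M ↑S : ℝ))
    (A B : Finset α)
    (hA : ∑ e ∈ A, x e = (mrank M ↑A : ℝ))
    (hB : ∑ e ∈ B, x e = (mrank M ↑B : ℝ)) :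
    ∑ e ∈ A ∩ B, x e = (mrank M ↑(A ∩ B) : ℝ) ∧
      ∑ e ∈ A ∪ B, x e = (mrank M ↑(A ∪ B) : ℝ) :=
  tight_sets_closed_under_inter_union_general M x hxP A B hA hB
end

section
/- Let m ≥ 2 be an integer, let α > 0 be a real number, and let x_0 ≤ x_1 ≤ ⋯ ≤ x_n be a nondecreasing sequence of real numbers with x_0 = 1/m² and x_i ≤ x_{i-1}·exp(8 ln m / α) for every 1 ≤ i ≤ n. Define z_i = x_i/2 if x_i > x_{i-1}, and z_i = 0 otherwise. Then ∑_{i=1}^{n} z_i ≥ (α / (48 ln m)) · (x_n − 1/m²). -/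
open scoped BigOperators

theorem fractional_accounting
    (m : ℕ) (hm : 2 ≤ m) (α : ℝ) (hα : 0 < α) (n : ℕ)
    (x z : ℕ → ℝ)
    (hx0 : x 0 = 1 / (m : ℝ) ^ 2)
    (hmono : ∀ i, 1 ≤ i → i ≤ n → x (i - 1) ≤ x i)
    (hgrow : ∀ i, 1 ≤ i → i ≤ n → x i ≤ x (i - 1) * Real.exp (8 * Real.log m / α))
    (hz : ∀ i, z i = if x (i - 1) < x i then x i / 2 else 0) :
    α / (48 * Real.log m) * (x n - 1 / (m : ℝ) ^ 2) ≤ ∑ i ∈ Finset.Icc 1 n, z i := by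
  have hm2 : (2 : ℝ) ≤ (m : ℝ) := by exact_mod_cast hm
  have hL : 0 < Real.log m := Real.log_pos (by linarith)
  set L := Real.log m with hLdef
  set K := α / (48 * L) with hKdef
  have hK : 0 < K := div_pos hα (by linarith)
  set c := 8 * L / α with hcdef
  have hc : 0 < c := div_pos (by linarith) hα
  -- positivity of x along the chain
  have hpos : ∀ i, i ≤ n → 0 < x i := by
    intro i hi
    induction i with
    | zero =>
      rw [hx0]
      positivity
    | succ k ih =>
      have h1 : x k ≤ x (k + 1) := by
        have := hmono (k + 1) (Nat.le_add_left 1 k) hi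
        simpa using this
      have := ih (Nat.le_of_succ_le hi)
      linarith
  -- key pointwise bound
  have key : ∀ i, 1 ≤ i → i ≤ n → K * (x i - x (i - 1)) ≤ z i := by
    intro i h1 h2
    rcases lt_or_ge (x (i - 1)) (x i) with hlt | hle
    · rw [hz i, if_pos hlt]
      have hxi : 0 < x i := hpos i h2
      have hg := hgrow i h1 h2
      have hec : 0 < Real.exp c := Real.exp_pos c
      have hlow : x i * Real.exp (-c) ≤ x (i - 1) := by
        rw [Real.exp_neg]
        rw [mul_inv_le_iff₀ hec]
        linarith
      have hone : 1 - Real.exp (-c) ≤ c := by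
        have := Real.add_one_le_exp (-c)
        linarith
      have hstep : x i - x (i - 1) ≤ x i * c := by
        have : x i - x (i - 1) ≤ x i * (1 - Real.exp (-c)) := by
          have := hlow; nlinarith
        calc x i - x (i - 1) ≤ x i * (1 - Real.exp (-c)) := this
          _ ≤ x i * c := by nlinarith
      have hKc : K * c = 1 / 6 := by
        rw [hKdef, hcdef]
        field_simp
        ring
      calc K * (x i - x (i - 1)) ≤ K * (x i * c) := by nlinarith
        _ = (K * c) * x i := by ring
        _ = x i / 6 := by rw [hKc]; ring
        _ ≤ x i / 2 := by linarith
    · rw [hz i, if_neg (not_lt.mpr hle)]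
      have := hmono i h1 h2
      nlinarith
  -- telescoping sum, by induction on the upper index
  have main : ∀ N, N ≤ n → K * (x N - x 0) ≤ ∑ i ∈ Finset.Icc 1 N, z i := by
    intro N
    induction N with
    | zero => intro _; simp
    | succ k ih =>
      intro hk
      have ihk := ih (Nat.le_of_succ_le hk)
      have hkey := key (k + 1) (Nat.le_add_left 1 k) hk
      rw [Finset.sum_Icc_succ_top (Nat.le_add_left 1 k)]
      have : x (k + 1 - 1) = x k := by simp
      rw [this] at hkey
      linarith
  have := main n le_rfl
  rw [hx0] at this
  exact this
end

section
/- Let M be a matroid on a finite ground set E with rank function r, let x : E → ℝ be a point of the matroid polytope P(M), and let G be an independent set of M such that for every e ∈ G there exists a set S ⊆ E with e ∈ S that is tight with respect to x (i.e. ∑_{a∈S} x_a = r(S)). Then ∑_{e∈E} x_e ≥ |G|. -/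
open scoped BigOperators Classical

/-!
Tight sets are closed under union: if `x(A) = r(A)` and `x(B) = r(B)`, then by submodularity
`x(A ∪ B) + x(A ∩ B) = r(A) + r(B) ≥ r(A ∪ B) + r(A ∩ B)`, while `x ∈ P(M)` bounds each term on
the left by the corresponding rank. Hence the union `T` of the tight sets covering `G` is tight,
and `|G| ≤ r(T) = x(T) ≤ x(E)`.
-/

namespace Matroid

variable {α : Type*} {M : Matroid α}

lemma mrank_eq_eRk_s4 {X : Set α} (hX : M.IsRkFinite X) : (mrank M X : ℕ∞) = M.eRk X := by
  obtain ⟨B, hB⟩ := hX.exists_finset_isBasis'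
  have hle : ∀ n ∈ {n : ℕ | ∃ I : Finset α, ↑I ⊆ X ∧ M.Indep ↑I ∧ I.card = n}, n ≤ B.card := by
    rintro _ ⟨I, hIX, hI, rfl⟩
    have h := hI.encard_le_eRk_of_subset hIX
    rwa [← hB.encard_eq_eRk, Set.encard_coe_eq_coe_finsetCard,
      Set.encard_coe_eq_coe_finsetCard, Nat.cast_le] at h
  have hrank : mrank M X = B.card :=
    le_antisymm (csSup_le ⟨_, B, hB.subset, hB.indep, rfl⟩ hle)
      (le_csSup ⟨_, hle⟩ ⟨B, hB.subset, hB.indep, rfl⟩)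
  rw [hrank, ← hB.encard_eq_eRk, Set.encard_coe_eq_coe_finsetCard]

lemma mrank_finset_eq_eRk (S : Finset α) : (mrank M S : ℕ∞) = M.eRk S :=
  mrank_eq_eRk_s4 (M.isRkFinite_of_finite S.finite_toSet)

lemma Indep.card_le_mrank {I S : Finset α} (hI : M.Indep I) (hIS : I ⊆ S) :
    I.card ≤ mrank M S := by
  have h := hI.encard_le_eRk_of_subset (Finset.coe_subset.2 hIS)
  rwa [← mrank_finset_eq_eRk, Set.encard_coe_eq_coe_finsetCard, Nat.cast_le] at h

lemma mrank_union_add_mrank_inter_le (A B : Finset α) :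
    mrank M ↑(A ∪ B) + mrank M ↑(A ∩ B) ≤ mrank M A + mrank M B := by
  have h := M.eRk_inter_add_eRk_union_le A B
  rw [← Finset.coe_inter, ← Finset.coe_union, ← mrank_finset_eq_eRk, ← mrank_finset_eq_eRk,
    ← mrank_finset_eq_eRk, ← mrank_finset_eq_eRk, add_comm] at h
  exact_mod_cast h

lemma mrank_empty : mrank M ∅ = 0 := by
  have h := mrank_finset_eq_eRk (M := M) ∅
  rwa [Finset.coe_empty, eRk_empty, Nat.cast_eq_zero] at h

def IsTight (M : Matroid α) (x : α → ℝ) (S : Finset α) : Prop :=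
  ∑ e ∈ S, x e = (mrank M S : ℝ)

variable {x : α → ℝ}

lemma isTight_empty : M.IsTight x ∅ := by
  simp [IsTight, mrank_empty]

lemma IsTight.union (hxP : ∀ S : Finset α, ∑ e ∈ S, x e ≤ (mrank M S : ℝ)) {A B : Finset α}
    (hA : M.IsTight x A) (hB : M.IsTight x B) : M.IsTight x (A ∪ B) := by
  have hsum : ∑ e ∈ A ∪ B, x e + ∑ e ∈ A ∩ B, x e = ∑ e ∈ A, x e + ∑ e ∈ B, x e :=
    Finset.sum_union_inter
  have hsub : (mrank M ↑(A ∪ B) : ℝ) + mrank M ↑(A ∩ B) ≤ mrank M A + mrank M B := by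
    exact_mod_cast mrank_union_add_mrank_inter_le A B
  unfold IsTight at *
  linarith [hxP (A ∪ B), hxP (A ∩ B)]

lemma exists_isTight_superset (hxP : ∀ S : Finset α, ∑ e ∈ S, x e ≤ (mrank M S : ℝ))
    {G : Finset α} (hcov : ∀ e ∈ G, ∃ S : Finset α, e ∈ S ∧ M.IsTight x S) :
    ∃ T : Finset α, G ⊆ T ∧ M.IsTight x T := by
  induction G using Finset.induction_on with
  | empty => exact ⟨∅, subset_rfl, isTight_empty⟩
  | insert e G _ ih =>
    obtain ⟨T, hGT, hT⟩ := ih fun a ha ↦ hcov a (Finset.mem_insert_of_mem ha)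
    obtain ⟨S, heS, hS⟩ := hcov e (Finset.mem_insert_self e G)
    exact ⟨S ∪ T, Finset.insert_subset (Finset.mem_union_left T heS)
      (hGT.trans Finset.subset_union_right), hS.union hxP hT⟩

end Matroid

theorem tight_cover_large_size_general
    {α : Type*} [Fintype α] (M : Matroid α)
    (x : α → ℝ) (hx0 : ∀ e, 0 ≤ x e)
    (hxP : ∀ S : Finset α, ∑ e ∈ S, x e ≤ (mrank M ↑S : ℝ))
    (G : Finset α) (hG : M.Indep ↑G)
    (hcov : ∀ e ∈ G, ∃ S : Finset α, e ∈ S ∧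
      ∑ a ∈ S, x a = (mrank M ↑S : ℝ)) :
    (G.card : ℝ) ≤ ∑ e : α, x e := by
  obtain ⟨T, hGT, hT⟩ := Matroid.exists_isTight_superset hxP hcov
  calc (G.card : ℝ) ≤ mrank M T := by exact_mod_cast hG.card_le_mrank hGT
    _ = ∑ e ∈ T, x e := hT.symm
    _ ≤ ∑ e, x e := Finset.sum_le_sum_of_subset_of_nonneg (Finset.subset_univ T)
      fun e _ _ ↦ hx0 e

theorem tight_cover_large_size
    {α : Type*} [Fintype α] (M : Matroid α) (hE : M.E = Set.univ)
    (x : α → ℝ) (hx0 : ∀ e, 0 ≤ x e)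
    (hxP : ∀ S : Finset α, ∑ e ∈ S, x e ≤ (mrank M ↑S : ℝ))
    (G : Finset α) (hG : M.Indep ↑G)
    (hcov : ∀ e ∈ G, ∃ S : Finset α, e ∈ S ∧
      ∑ a ∈ S, x a = (mrank M ↑S : ℝ)) :
    (G.card : ℝ) ≤ ∑ e : α, x e :=
  tight_cover_large_size_general M x hx0 hxP G hG hcov
end

section
/- Let N be a matroid on a finite ground set E with rank function r and rank k = r(E), let B be a base of N, and let z : E → [0,1] satisfy ∑_{e∈S} z_e ≤ r(S)/2 for every S ⊆ E. Let D be a random subset of E obtained by including each element e independently with probability z_e. Then ∑_{e∈B} Pr[e ∉ span(D)] ≥ k/2; explicitly, ∑_{D⊆E} (∏_{e∈D} z_e)(∏_{e∈E∖D} (1−z_e)) · |{e ∈ B : e ∉ span(D)}| ≥ k/2. -/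
open scoped BigOperators Classical

namespace Matroid

variable {α : Type*} {M : Matroid α}

lemma Indep.encard_le_card_of_subset_closure {I : Set α} {D : Finset α} (hI : M.Indep I)
    (hID : I ⊆ M.closure ↑D) : I.encard ≤ D.card :=
  calc I.encard ≤ M.eRk (M.closure ↑D) := hI.encard_le_eRk_of_subset hID
    _ = M.eRk ↑D := M.eRk_closure_eq _
    _ ≤ (↑D : Set α).encard := M.eRk_le_encard _
    _ = D.card := Set.encard_coe_eq_coe_finsetCard D

lemma Indep.card_le_card_filter_notMem_closure_add {I D : Finset α} (hI : M.Indep ↑I) :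
    I.card ≤ (I.filter (· ∉ M.closure ↑D)).card + D.card := by
  have hspanned : (I.filter (· ∈ M.closure ↑D)).card ≤ D.card := by
    have hindep : M.Indep ↑(I.filter (· ∈ M.closure ↑D)) :=
      hI.subset (by simp +contextual [Set.subset_def])
    have := hindep.encard_le_card_of_subset_closure (fun x hx => (Finset.mem_filter.1 hx).2)
    rwa [Set.encard_coe_eq_coe_finsetCard, Nat.cast_le] at this
  have := Finset.card_filter_add_card_filter_not (s := I) (p := (· ∈ M.closure ↑D))
  omega

lemma mrank_univ_eq_card_of_isBase {B : Finset α} (hB : M.IsBase ↑B) :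
    mrank M Set.univ = B.card := by
  refine IsGreatest.csSup_eq ⟨⟨B, Set.subset_univ _, hB.indep, rfl⟩, ?_⟩
  rintro _ ⟨I, -, hI, rfl⟩
  have := hI.encard_le_eRank
  rwa [← hB.encard_eq_eRank, Set.encard_coe_eq_coe_finsetCard,
    Set.encard_coe_eq_coe_finsetCard, Nat.cast_le] at this

end Matroid

section RandomSubset

variable {α : Type*} [Fintype α]

noncomputable def subsetProb (z : α → ℝ) (D : Finset α) : ℝ :=
  (∏ e ∈ D, z e) * ∏ e ∈ Dᶜ, (1 - z e)

lemma subsetProb_nonneg {z : α → ℝ} (hz : ∀ e, 0 ≤ z e ∧ z e ≤ 1) (D : Finset α) :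
    0 ≤ subsetProb z D :=
  mul_nonneg (Finset.prod_nonneg fun e _ => (hz e).1)
    (Finset.prod_nonneg fun e _ => sub_nonneg.2 (hz e).2)

lemma sum_subsetProb (z : α → ℝ) : ∑ D, subsetProb z D = 1 := by
  simp [subsetProb, ← Fintype.prod_add]

lemma sum_subsetProb_mul_indicator_mem (z : α → ℝ) (e : α) :
    ∑ D, subsetProb z D * (if e ∈ D then 1 else 0) = z e := by
  -- Setting the factor `1 - z e` to `0` kills exactly the subsets that miss `e`.
  set w := Function.update (fun i => 1 - z i) e 0
  have hterm : ∀ D : Finset α,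
      subsetProb z D * (if e ∈ D then 1 else 0) = (∏ i ∈ D, z i) * ∏ i ∈ Dᶜ, w i := by
    intro D
    by_cases he : e ∈ D
    · have hw : ∀ i ∈ Dᶜ, w i = 1 - z i := fun i hi =>
        Function.update_of_ne (by rintro rfl; exact Finset.mem_compl.1 hi he) _ _
      rw [if_pos he, mul_one, Finset.prod_congr rfl hw, subsetProb]
    · rw [if_neg he, mul_zero, Finset.prod_eq_zero (Finset.mem_compl.2 he) (by simp [w]),
        mul_zero]
  rw [Finset.sum_congr rfl fun D _ => hterm D, ← Fintype.prod_add,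
    Fintype.prod_eq_single e fun i hi => by simp [w, hi]]
  simp [w]

lemma sum_subsetProb_mul_card (z : α → ℝ) :
    ∑ D, subsetProb z D * D.card = ∑ e, z e := by
  have hcard : ∀ D : Finset α, (D.card : ℝ) = ∑ e, if e ∈ D then 1 else 0 := by simp
  simp_rw [hcard, Finset.mul_sum]
  rw [Finset.sum_comm]
  exact Finset.sum_congr rfl fun e _ => sum_subsetProb_mul_indicator_mem z e

end RandomSubset

theorem expected_unspanned_base_elements_general
    {α : Type*} [Fintype α] (N : Matroid α)
    (B : Finset α) (hB : N.IsBase ↑B)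
    (z : α → ℝ) (hz : ∀ e, 0 ≤ z e ∧ z e ≤ 1)
    (hzP : ∀ S : Finset α, ∑ e ∈ S, z e ≤ (mrank N ↑S : ℝ) / 2) :
    (mrank N Set.univ : ℝ) / 2 ≤
      ∑ D : Finset α, (∏ e ∈ D, z e) * (∏ e ∈ Dᶜ, (1 - z e)) *
        ((B.filter (fun e => e ∉ N.closure ↑D)).card : ℝ) := by
  rw [Matroid.mrank_univ_eq_card_of_isBase hB]
  have hbudget : ∑ e, z e ≤ (B.card : ℝ) / 2 := by
    simpa [Matroid.mrank_univ_eq_card_of_isBase hB] using hzP Finset.univ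
  have hpointwise : ∀ D : Finset α, (B.card : ℝ) - D.card ≤ (B.filter (· ∉ N.closure ↑D)).card :=
    fun D => by
      have := hB.indep.card_le_card_filter_notMem_closure_add (D := D)
      rw [sub_le_iff_le_add]; exact_mod_cast this
  calc (B.card : ℝ) / 2 ≤ B.card - ∑ e, z e := by linarith
    _ = ∑ D, subsetProb z D * (B.card - D.card) := by
      simp only [mul_sub, Finset.sum_sub_distrib, ← Finset.sum_mul, sum_subsetProb,
        sum_subsetProb_mul_card, one_mul]
    _ ≤ _ := Finset.sum_le_sum fun D _ =>
      mul_le_mul_of_nonneg_left (hpointwise D) (subsetProb_nonneg hz D)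

theorem expected_unspanned_base_elements
    {α : Type*} [Fintype α] (N : Matroid α) (hE : N.E = Set.univ)
    (B : Finset α) (hB : N.IsBase ↑B)
    (z : α → ℝ) (hz : ∀ e, 0 ≤ z e ∧ z e ≤ 1)
    (hzP : ∀ S : Finset α, ∑ e ∈ S, z e ≤ (mrank N ↑S : ℝ) / 2) :
    (mrank N Set.univ : ℝ) / 2 ≤
      ∑ D : Finset α, (∏ e ∈ D, z e) * (∏ e ∈ Dᶜ, (1 - z e)) *
        ((B.filter (fun e => e ∉ N.closure ↑D)).card : ℝ) :=
  expected_unspanned_base_elements_general N B hB z hz hzP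
end

section
/- Let N be a matroid on a finite ground set E with rank function r and rank k = r(E) ≥ 1, let B be a base of N, and let z : E → [0,1] satisfy ∑_{e∈S} z_e ≤ r(S)/2 for every S ⊆ E. Let D be a random subset of E obtained by including each element e independently with probability z_e. Then there exists an element e ∈ B such that Pr[e ∉ span(D ∖ {e})] ≥ 1/2. -/
open scoped BigOperators Classical

/-!
For each outcome `D`, the elements of `B` spanned by `D` minus themselves form an independent
subset of the closure of `D`, so there are at most `|D|` of them. Hence the expected number of
elements of `B` left unspanned is at least `|B| - 𝔼|D| = |B| - ∑ z ≥ |B| - r(E)/2 = |B|/2`,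
and some element of `B` is unspanned with probability at least `1/2`.
-/

section

open Finset

variable {α : Type*}

section Matroid

variable {M : Matroid α}

lemma mrank_le_card_of_isBase {B : Finset α} (hB : M.IsBase ↑B) (S : Set α) :
    mrank M S ≤ B.card := by
  refine csSup_le ⟨0, ∅, by simp, by simp, rfl⟩ ?_
  rintro n ⟨I, -, hI, rfl⟩
  have h := hI.encard_le_eRank
  rwa [← hB.encard_eq_eRank, Set.encard_coe_eq_coe_finsetCard,
    Set.encard_coe_eq_coe_finsetCard, Nat.cast_le] at h

lemma Matroid.Indep.card_le_card_of_subset_closure {I D : Finset α} (hI : M.Indep ↑I)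
    (hID : ↑I ⊆ M.closure ↑D) : I.card ≤ D.card := by
  have h := (hI.encard_le_eRk_of_subset hID).trans_eq (M.eRk_closure_eq _)
    |>.trans (M.eRk_le_encard _)
  rwa [Set.encard_coe_eq_coe_finsetCard, Set.encard_coe_eq_coe_finsetCard, Nat.cast_le] at h

variable [DecidableEq α]

lemma Matroid.Indep.card_le_card_filter_notMem_closure_erase_add {B : Finset α}
    (hB : M.Indep ↑B) (D : Finset α) :
    B.card ≤ #{e ∈ B | e ∉ M.closure ↑(D.erase e)} + D.card := by
  have hspanned : #{e ∈ B | e ∈ M.closure ↑(D.erase e)} ≤ D.card := by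
    refine (hB.subset (coe_subset.2 (filter_subset _ B))).card_le_card_of_subset_closure
      fun e he ↦ ?_
    exact M.closure_subset_closure (coe_subset.2 (D.erase_subset e)) (mem_filter.1 he).2
  have := card_filter_add_card_filter_not (s := B) (fun e ↦ e ∈ M.closure ↑(D.erase e))
  omega

end Matroid

section Bernoulli

variable [Fintype α] [DecidableEq α] (z : α → ℝ)

/-- The probability that the random set, containing each `a` independently with probability
`z a`, equals `D`. -/
def bernoulliWeight (D : Finset α) : ℝ :=
  (∏ a ∈ D, z a) * ∏ a ∈ Dᶜ, (1 - z a)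

lemma bernoulliWeight_nonneg {z : α → ℝ} (hz : ∀ a, 0 ≤ z a ∧ z a ≤ 1) (D : Finset α) :
    0 ≤ bernoulliWeight z D :=
  mul_nonneg (prod_nonneg fun a _ ↦ (hz a).1)
    (prod_nonneg fun a _ ↦ sub_nonneg.2 (hz a).2)

lemma sum_bernoulliWeight : ∑ D, bernoulliWeight z D = 1 := by
  have h := prod_add z (fun a ↦ 1 - z a) univ
  simp only [add_sub_cancel, prod_const_one, powerset_univ] at h
  simp only [bernoulliWeight, compl_eq_univ_sdiff]
  exact h.symm

lemma sum_bernoulliWeight_mul_indicator_mem (e : α) :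
    ∑ D, bernoulliWeight z D * (if e ∈ D then 1 else 0) = z e := by
  -- expand `∏ a, (z a + [a ≠ e] (1 - z a)) = z e` over subsets
  have h := prod_add z (fun a ↦ if a = e then 0 else 1 - z a) univ
  have hprod : ∏ a, (z a + if a = e then 0 else 1 - z a) = z e := by
    rw [prod_eq_single e (fun b _ hb ↦ by simp [hb]) (by simp), if_pos rfl, add_zero]
  rw [hprod, powerset_univ] at h
  rw [h]
  refine sum_congr rfl fun D _ ↦ ?_
  rw [bernoulliWeight, compl_eq_univ_sdiff]
  by_cases heD : e ∈ D
  · rw [if_pos heD, mul_one]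
    congr 1
    refine prod_congr rfl fun a ha ↦ ?_
    rw [if_neg (by rintro rfl; exact (mem_sdiff.1 ha).2 heD)]
  · have hzero : ∏ a ∈ univ \ D, (if a = e then (0 : ℝ) else 1 - z a) = 0 :=
      prod_eq_zero (mem_sdiff.2 ⟨mem_univ e, heD⟩) (if_pos rfl)
    rw [if_neg heD, mul_zero, hzero, mul_zero]

lemma sum_bernoulliWeight_mul_card : ∑ D, bernoulliWeight z D * D.card = ∑ a, z a := by
  calc ∑ D, bernoulliWeight z D * D.card
      = ∑ D, ∑ e, bernoulliWeight z D * (if e ∈ D then 1 else 0) := by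
        refine sum_congr rfl fun D _ ↦ ?_
        rw [← mul_sum, sum_boole]
        simp
    _ = ∑ e, z e := by
        rw [sum_comm]
        exact sum_congr rfl fun e _ ↦ sum_bernoulliWeight_mul_indicator_mem z e

end Bernoulli

lemma sum_mul_card_filter_not {β : Type*} (s : Finset β) (B : Finset α) (w : β → ℝ)
    (p : β → α → Prop) :
    ∑ D ∈ s, w D * #{e ∈ B | ¬ p D e} =
      ∑ e ∈ B, ∑ D ∈ s, w D * (if p D e then 0 else 1) := by
  simp only [card_filter, Nat.cast_sum, Nat.cast_ite, Nat.cast_one, Nat.cast_zero, mul_sum,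
    ite_not]
  exact sum_comm

end

theorem exists_base_element_often_unspanned_general
    {α : Type*} [Fintype α] [DecidableEq α] (N : Matroid α)
    (hk : 1 ≤ mrank N Set.univ)
    (B : Finset α) (hB : N.IsBase ↑B)
    (z : α → ℝ) (hz : ∀ e, 0 ≤ z e ∧ z e ≤ 1)
    (hzP : ∀ S : Finset α, ∑ e ∈ S, z e ≤ (mrank N ↑S : ℝ) / 2) :
    ∃ e ∈ B, (1 : ℝ) / 2 ≤
      ∑ D : Finset α, (∏ a ∈ D, z a) * (∏ a ∈ Dᶜ, (1 - z a)) *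
        (if e ∈ N.closure ↑(D.erase e) then 0 else 1) := by
  have hBne : B.Nonempty := Finset.card_pos.1 (hk.trans (mrank_le_card_of_isBase hB _))
  have hsum_z : ∑ a, z a ≤ (B.card : ℝ) / 2 := by
    have hrank : (mrank N Set.univ : ℝ) ≤ B.card := by
      exact_mod_cast mrank_le_card_of_isBase hB _
    have := hzP Finset.univ
    rw [Finset.coe_univ] at this
    linarith
  refine Finset.exists_le_of_sum_le hBne ?_
  calc ∑ _e ∈ B, (1 : ℝ) / 2
      ≤ B.card - ∑ a, z a := by rw [Finset.sum_const, nsmul_eq_mul]; linarith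
    _ = ∑ D, bernoulliWeight z D * (B.card - D.card) := by
        simp only [mul_sub, Finset.sum_sub_distrib, ← Finset.sum_mul, sum_bernoulliWeight,
          one_mul, sum_bernoulliWeight_mul_card]
    _ ≤ ∑ D, bernoulliWeight z D *
          (B.filter fun e ↦ e ∉ N.closure ↑(D.erase e)).card := by
        refine Finset.sum_le_sum fun D _ ↦
          mul_le_mul_of_nonneg_left ?_ (bernoulliWeight_nonneg hz D)
        rw [sub_le_iff_le_add]
        exact_mod_cast hB.indep.card_le_card_filter_notMem_closure_erase_add D
    _ = _ := sum_mul_card_filter_not _ _ _ _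

theorem exists_base_element_often_unspanned
    {α : Type*} [Fintype α] [DecidableEq α] (N : Matroid α) (hE : N.E = Set.univ)
    (hk : 1 ≤ mrank N Set.univ)
    (B : Finset α) (hB : N.IsBase ↑B)
    (z : α → ℝ) (hz : ∀ e, 0 ≤ z e ∧ z e ≤ 1)
    (hzP : ∀ S : Finset α, ∑ e ∈ S, z e ≤ (mrank N ↑S : ℝ) / 2) :
    ∃ e ∈ B, (1 : ℝ) / 2 ≤
      ∑ D : Finset α, (∏ a ∈ D, z a) * (∏ a ∈ Dᶜ, (1 - z a)) *
        (if e ∈ N.closure ↑(D.erase e) then 0 else 1) :=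
  exists_base_element_often_unspanned_general N hk B hB z hz hzP
end

section
/- Let N be a matroid on a finite ground set E, let w : E → ℝ be a weight function, and let w_min > 0 and J ∈ ℕ be such that w_min ≤ w_e < 2^{J+1}·w_min for every e ∈ E. Define the weighted rank function f(S) = max{∑_{e∈I} w_e : I ⊆ S, I independent in N}, and for each j ∈ {0, 1, …, J} define f_j(S) = max{|I| : I ⊆ S, I independent in N, and 2^j·w_min ≤ w_e < 2^{j+1}·w_min for all e ∈ I}. Then for every S ⊆ E, f(S) ≤ 2 · ∑_{j=0}^{J} 2^j · w_min · f_j(S). -/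
open scoped BigOperators Classical

/-- The weighted rank function of a matroid: the maximum total weight of an
independent subset of `S`. -/
noncomputable def wrank {α : Type*} (N : Matroid α) (w : α → ℝ) (S : Finset α) : ℝ :=
  sSup {v : ℝ | ∃ I ⊆ S, N.Indep ↑I ∧ v = ∑ e ∈ I, w e}

/-- The class-`j` rank function: the maximum cardinality of an independent subset of `S`
all of whose elements have weight in `[2^j * wmin, 2^(j+1) * wmin)`. -/
noncomputable def classRank {α : Type*} (N : Matroid α) (w : α → ℝ) (wmin : ℝ)
    (j : ℕ) (S : Finset α) : ℕ :=
  sSup {k : ℕ | ∃ I ⊆ S, N.Indep ↑I ∧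
    (∀ e ∈ I, 2 ^ j * wmin ≤ w e ∧ w e < 2 ^ (j + 1) * wmin) ∧ I.card = k}

lemma exists_dyadic_class {x wmin : ℝ} (J : ℕ) (h1 : wmin ≤ x)
    (h2 : x < 2 ^ (J + 1) * wmin) :
    ∃ j, j ≤ J ∧ 2 ^ j * wmin ≤ x ∧ x < 2 ^ (j + 1) * wmin := by
  induction J with
  | zero => exact ⟨0, le_refl 0, by simpa using h1, h2⟩
  | succ n ih =>
    by_cases hx : x < 2 ^ (n + 1) * wmin
    · obtain ⟨j, hj, h⟩ := ih hx
      exact ⟨j, hj.trans (Nat.le_succ n), h⟩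
    · exact ⟨n + 1, le_refl _, not_lt.1 hx, h2⟩

theorem weighted_rank_le_sum_of_class_ranks
    {α : Type*} [Fintype α] (N : Matroid α) (hE : N.E = Set.univ)
    (w : α → ℝ) (wmin : ℝ) (hwmin : 0 < wmin) (J : ℕ)
    (hw : ∀ e : α, wmin ≤ w e ∧ w e < 2 ^ (J + 1) * wmin) :
    ∀ S : Finset α,
      wrank N w S ≤ 2 * ∑ j ∈ Finset.range (J + 1),
        2 ^ j * wmin * (classRank N w wmin j S : ℝ) := by
  intro S
  apply Real.sSup_le
  · rintro v ⟨I, hIS, hInd, rfl⟩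
    have hcls := fun e : α => Classical.choose_spec (exists_dyadic_class J (hw e).1 (hw e).2)
    set cls : α → ℕ := fun e => Classical.choose (exists_dyadic_class J (hw e).1 (hw e).2)
      with hclsdef
    rw [← Finset.sum_fiberwise_of_maps_to (g := cls) (t := Finset.range (J + 1))
      (fun e _ => Finset.mem_range.2 (Nat.lt_succ_of_le (hcls e).1)), Finset.mul_sum]
    apply Finset.sum_le_sum
    intro j hj
    set Ij := I.filter (fun e => cls e = j) with hIjdef
    have hsubI : Ij ⊆ I := Finset.filter_subset _ _
    have hclsj : ∀ e ∈ Ij, 2 ^ j * wmin ≤ w e ∧ w e < 2 ^ (j + 1) * wmin := by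
      intro e he
      have hej : cls e = j := (Finset.mem_filter.1 he).2
      rw [← hej]
      exact (hcls e).2
    have hcard : Ij.card ≤ classRank N w wmin j S := by
      apply le_csSup
      · exact ⟨S.card, fun k hk => by
          obtain ⟨I', hI', _, _, hk⟩ := hk
          exact hk ▸ Finset.card_le_card hI'⟩
      · exact ⟨Ij, hsubI.trans hIS, hInd.subset (by exact_mod_cast hsubI), hclsj, rfl⟩
    calc ∑ e ∈ Ij, w e ≤ Ij.card • (2 ^ (j + 1) * wmin) :=
          Finset.sum_le_card_nsmul _ _ _ (fun e he => (hclsj e he).2.le)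
      _ = (Ij.card : ℝ) * (2 ^ (j + 1) * wmin) := by simp [nsmul_eq_mul]
      _ ≤ (classRank N w wmin j S : ℝ) * (2 ^ (j + 1) * wmin) := by
          apply mul_le_mul_of_nonneg_right (by exact_mod_cast hcard)
          positivity
      _ = 2 * (2 ^ j * wmin * (classRank N w wmin j S : ℝ)) := by ring
  · positivity
end
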